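/- Let C ⊆ {0,1}^m be a code and C' ⊆ C a subcode with CL(C') = ℓ. Let T = Supp(C') be the set of coordinates on which some codeword of C' is nonzero, and let C|_{T̄} be the restriction of C to the complement of T. Then CL(C|_{T̄}) ≤ CL(C) − ℓ. -/
import Mathlib


namespace Paper

/-- A chain of length `ℓ` in a code `C ⊆ {0,1}^m`. -/
def HasChain {m : ℕ} (C : Set (Fin m → Bool)) (ℓ : ℕ) : Prop :=
  ∃ (a : Fin ℓ → Fin m) (c : Fin ℓ → (Fin m → Bool)),
    Function.Injective a ∧ Function.Injective c ∧ (∀ i, c i ∈ C) ∧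
    (∀ i, c i (a i) = true) ∧ (∀ i j : Fin ℓ, i < j → c i (a j) = false)

/-- The chain length of a code. -/
noncomputable def CL {m : ℕ} (C : Set (Fin m → Bool)) : ℕ := sSup {ℓ | HasChain C ℓ}

/-- The support of a code. -/
def Supp {m : ℕ} (C : Set (Fin m → Bool)) : Set (Fin m) := {i | ∃ c ∈ C, c i = true}

/-- Hamming weight. -/
def wt {m : ℕ} (c : Fin m → Bool) : ℕ := (Finset.univ.filter fun i => c i = true).card

open Classical in
/-- Zero out the coordinates outside `S`. -/
noncomputable def mask {m : ℕ} (S : Set (Fin m)) (c : Fin m → Bool) : Fin m → Bool :=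
  fun i => if i ∈ S then c i else false

/-- Restriction of a code to a coordinate set `S`. -/
noncomputable def restrict {m : ℕ} (C : Set (Fin m → Bool)) (S : Set (Fin m)) :
    Set (Fin m → Bool) := mask S '' C

/-- Non-redundancy of a code. -/
noncomputable def NRD {m : ℕ} (C : Set (Fin m → Bool)) : ℕ :=
  sSup {k | ∃ S : Finset (Fin m), S.card = k ∧
    ∀ j ∈ S, ∃ c ∈ C, c j = true ∧ ∀ i ∈ S, i ≠ j → c i = false}

/-- The density `Φ(C)` of a finite code. -/
noncomputable def density {m : ℕ} (C : Finset (Fin m → Bool)) : ℝ :=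
  sInf {x : ℝ | ∃ C' : Finset (Fin m → Bool), C' ⊆ C ∧ C'.Nonempty ∧
    1 ≤ CL (↑C' : Set (Fin m → Bool)) ∧
    x = (Supp (↑C' : Set (Fin m → Bool))).ncard / (CL (↑C' : Set (Fin m → Bool)) : ℝ)}


lemma hasChain_zero {m : ℕ} (C : Set (Fin m → Bool)) : HasChain C 0 :=
  ⟨Fin.elim0, Fin.elim0, fun i => i.elim0, fun i => i.elim0,
   fun i => i.elim0, fun i => i.elim0, fun i => i.elim0⟩

lemma hasChain_le {m ℓ : ℕ} {C : Set (Fin m → Bool)} (h : HasChain C ℓ) : ℓ ≤ m := by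
  obtain ⟨a, c, ha, _⟩ := h
  simpa using Fintype.card_le_of_injective a ha

lemma bddAbove_chain {m : ℕ} (C : Set (Fin m → Bool)) :
    BddAbove {ℓ | HasChain C ℓ} := ⟨m, fun ℓ h => hasChain_le h⟩

lemma hasChain_CL {m : ℕ} (C : Set (Fin m → Bool)) : HasChain C (CL C) :=
  Nat.sSup_mem ⟨0, by exact hasChain_zero C⟩ (bddAbove_chain C)

lemma le_CL {m ℓ : ℕ} {C : Set (Fin m → Bool)} (h : HasChain C ℓ) : ℓ ≤ CL C :=
  le_csSup (bddAbove_chain C) h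

lemma hasChain_combine {m ℓ k : ℕ} {C C' : Set (Fin m → Bool)} (hsub : C' ⊆ C)
    (h1 : HasChain C' ℓ) (h2 : HasChain (restrict C (Supp C')ᶜ) k) :
    HasChain C (ℓ + k) := by
  obtain ⟨a₁, c₁, ha₁, hc₁, hm₁, ht₁, hf₁⟩ := h1
  obtain ⟨a₂, c₂, ha₂, hc₂, hm₂, ht₂, hf₂⟩ := h2
  -- lift masked codewords
  have hlift : ∀ j, ∃ d ∈ C, mask (Supp C')ᶜ d = c₂ j := fun j => by
    obtain ⟨d, hd, hdm⟩ := hm₂ j; exact ⟨d, hd, hdm⟩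
  choose d hd hdm using hlift
  -- coordinates of the restricted chain avoid Supp C'
  have hout : ∀ j, (a₂ j : Fin m) ∉ Supp C' := by
    intro j hj
    have := ht₂ j
    rw [← hdm j] at this
    simp [mask, hj] at this
  have hdt : ∀ j, d j (a₂ j) = true := by
    intro j
    have := ht₂ j
    rw [← hdm j] at this
    simpa [mask, hout j] using this
  have hC'false : ∀ x ∈ C', ∀ j, x (a₂ j) = false := by
    intro x hx j
    by_contra h
    exact hout j ⟨x, hx, by simpa using h⟩
  have hin : ∀ i, (a₁ i : Fin m) ∈ Supp C' := fun i => ⟨c₁ i, hm₁ i, ht₁ i⟩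
  refine ⟨fun i => if h : (i : ℕ) < ℓ then a₁ ⟨i, h⟩ else a₂ ⟨i - ℓ, by omega⟩,
          fun i => if h : (i : ℕ) < ℓ then c₁ ⟨i, h⟩ else d ⟨i - ℓ, by omega⟩,
          ?_, ?_, ?_, ?_, ?_⟩
  · intro i j hij
    by_cases hi : (i : ℕ) < ℓ <;> by_cases hj : (j : ℕ) < ℓ <;> simp [hi, hj] at hij
    · have h := ha₁ hij; simp only [Fin.ext_iff] at h ⊢; simpa using h
    · exact absurd (hij ▸ hin ⟨i, hi⟩) (hout _)
    · exact absurd (hij ▸ hout ⟨(i : ℕ) - ℓ, by omega⟩) (fun h => h (hin _))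
    · have h := ha₂ hij; simp only [Fin.ext_iff] at h ⊢; omega
  · intro i j hij
    by_cases hi : (i : ℕ) < ℓ <;> by_cases hj : (j : ℕ) < ℓ <;> simp [hi, hj] at hij
    · have h := hc₁ hij; simp only [Fin.ext_iff] at h ⊢; simpa using h
    · have h1 : c₁ ⟨i, hi⟩ ∈ C' := hm₁ _
      rw [hij] at h1
      exact absurd (hdt ⟨(j : ℕ) - ℓ, by omega⟩) (by simp [hC'false _ h1])
    · have h1 : c₁ ⟨j, hj⟩ ∈ C' := hm₁ _
      rw [← hij] at h1
      exact absurd (hdt ⟨(i : ℕ) - ℓ, by omega⟩) (by simp [hC'false _ h1])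
    · have : c₂ ⟨(i : ℕ) - ℓ, by omega⟩ = c₂ ⟨(j : ℕ) - ℓ, by omega⟩ := by
        rw [← hdm, ← hdm, hij]
      have h := hc₂ this; simp only [Fin.ext_iff] at h ⊢; omega
  · intro i
    by_cases hi : (i : ℕ) < ℓ <;> simp [hi]
    · exact hsub (hm₁ _)
    · exact hd _
  · intro i
    by_cases hi : (i : ℕ) < ℓ <;> simp [hi]
    · exact ht₁ _
    · exact hdt _
  · intro i j hij
    have hij' : (i : ℕ) < (j : ℕ) := hij
    by_cases hi : (i : ℕ) < ℓ <;> by_cases hj : (j : ℕ) < ℓ <;> simp [hi, hj]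
    · exact hf₁ _ _ (Fin.mk_lt_mk.mpr hij')
    · exact hC'false _ (hm₁ _) _
    · omega
    · have hjo : (j : ℕ) - ℓ < k := by omega
      have h := hf₂ ⟨(i : ℕ) - ℓ, by omega⟩ ⟨(j : ℕ) - ℓ, hjo⟩ (Fin.mk_lt_mk.mpr (by omega))
      rw [← hdm] at h
      have ho := hout ⟨(j : ℕ) - ℓ, hjo⟩
      rw [show mask (Supp C')ᶜ (d ⟨(i : ℕ) - ℓ, by omega⟩) (a₂ ⟨(j : ℕ) - ℓ, hjo⟩) = d ⟨(i : ℕ) - ℓ, by omega⟩ (a₂ ⟨(j : ℕ) - ℓ, hjo⟩) from if_pos ho] at h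
      exact h

/-- removing the support of a subcode decreases chain length by at least
the chain length of the subcode. -/
theorem cl_restrict_compl_supp {m : ℕ} (C C' : Set (Fin m → Bool)) (ℓ : ℕ)
    (hsub : C' ⊆ C) (hℓ : CL C' = ℓ) :
    CL (restrict C (Supp C')ᶜ) ≤ CL C - ℓ := by
  have h1 : HasChain C' ℓ := hℓ ▸ hasChain_CL C'
  refine csSup_le ⟨0, hasChain_zero _⟩ ?_
  intro k hk
  have := le_CL (hasChain_combine hsub h1 hk)
  omega
end Paper
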